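/- For every positive integer n, the sum over k from 0 to 2n of C(2n,k)·|n−k| equals n·C(2n,n). -/

import Mathlib

/-!
Since `(m - k) C(m,k) = (k + 1) C(m,k+1)`, the weighted deviations `(m - 2k) C(m,k)` telescope:
`∑_{k<j} (m - 2k) C(m,k) = j C(m,j)`. Over all `k ≤ m` this sum vanishes, so the absolute deviations
sum to twice the positive ones, which is the telescoped sum up to `j = ⌈m/2⌉`.
-/

open Finset

theorem Nat.cast_choose_succ_right_eq (m j : ℕ) :
    (m.choose (j + 1) : ℤ) * (j + 1) = m.choose j * (m - j) := by
  rcases le_or_gt j m with hjm | hmj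
  · rw [← Nat.cast_sub hjm]
    exact_mod_cast Nat.choose_succ_right_eq m j
  · simp [Nat.choose_eq_zero_of_lt hmj, Nat.choose_eq_zero_of_lt (Nat.lt_succ_of_lt hmj)]

theorem sum_range_choose_mul_sub_two_mul (m j : ℕ) :
    ∑ k ∈ range j, (m.choose k : ℤ) * (m - 2 * k) = j * m.choose j := by
  induction j with
  | zero => simp
  | succ j ih =>
    rw [sum_range_succ, ih]
    push_cast
    linear_combination (Nat.cast_choose_succ_right_eq m j).symm

theorem sum_range_choose_mul_abs_sub_two_mul (m : ℕ) :
    ∑ k ∈ range (m + 1), (m.choose k : ℤ) * |(m : ℤ) - 2 * k| =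
      2 * ((m + 1) / 2 : ℕ) * m.choose ((m + 1) / 2) := by
  set j := (m + 1) / 2
  have hpos : ∑ k ∈ range (m + 1), (m.choose k : ℤ) * max ((m : ℤ) - 2 * k) 0 =
      ∑ k ∈ range j, (m.choose k : ℤ) * (m - 2 * k) := by
    symm
    refine sum_subset_zero_on_sdiff (range_subset_range.2 (by omega)) ?_ ?_
    · intro k hk
      simp only [mem_sdiff, mem_range] at hk
      rw [max_eq_right (by omega), mul_zero]
    · intro k hk
      rw [max_eq_left (by simp only [mem_range] at hk; omega)]
  have habs (x : ℤ) : |x| = 2 * max x 0 - x := by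
    linarith [max_zero_add_max_neg_zero_eq_abs_self x, max_zero_sub_max_neg_zero_eq_self x]
  calc ∑ k ∈ range (m + 1), (m.choose k : ℤ) * |(m : ℤ) - 2 * k|
      = 2 * ∑ k ∈ range (m + 1), (m.choose k : ℤ) * max ((m : ℤ) - 2 * k) 0 -
          ∑ k ∈ range (m + 1), (m.choose k : ℤ) * (m - 2 * k) := by
        rw [mul_sum, ← sum_sub_distrib]
        exact sum_congr rfl fun k _ => by rw [habs]; ring
    _ = 2 * (j * m.choose j) := by
        rw [hpos, sum_range_choose_mul_sub_two_mul, sum_range_choose_mul_sub_two_mul,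
          Nat.choose_succ_self]
        simp
    _ = _ := by ring

theorem stmt_0 (n : ℕ) :
    ∑ k ∈ Finset.range (2 * n + 1), (Nat.choose (2 * n) k : ℤ) * |(n : ℤ) - k| =
      n * Nat.choose (2 * n) n := by
  have h := sum_range_choose_mul_abs_sub_two_mul (2 * n)
  have hj : (2 * n + 1) / 2 = n := by omega
  simp only [hj, Nat.cast_mul, Nat.cast_ofNat, ← mul_sub, abs_mul, abs_two, mul_left_comm _ (2 : ℤ),
    ← mul_sum] at h
  linarith
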